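/- arXiv:1004.3854 — 2 statements merged into one kernel-verified Lean document; each statement's English description precedes it below -/
import Mathlib

section
/- Let n be a positive integer and a,b real parameters. Consider the Tremblay–Turbiner–Winternitz Hamiltonian H = (1/2)(p_r² + p_φ²/r²) + a/(r² cos²(nφ)) + b/(r² sin²(nφ)) and set G := (1/2)p_φ² + a/cos²(nφ) + b/sin²(nφ). Then on the open set where r > 0, cos(nφ) ≠ 0, sin(nφ) ≠ 0 and G > 0, the functions F₁ := Σ_{k=0}^{n} (−1)ᵏ C(2n,2k) (2G)^{n−k} (p_r^{2k}/r^{2(n−k)}) [ G sin(2nφ) p_φ − (2(n−k)/(2k+1)) (G cos(2nφ) + b − a) r p_r ] and F₂ := Σ_{k=0}^{n} (−1)ᵏ C(2n,2k) (2G)^{n−k} (p_r^{2k}/r^{2(n−k)}) [ (2(n−k)/(2k+1)) sin(2nφ) r p_r p_φ + 2 (G cos(2nφ) + b − a) ] are first integrals of H: {H,F₁} = 0 and {H,F₂} = 0. -/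
/-!
The Poisson bracket `{H, F}` at a point is minus the derivative of `F` along any curve solving
Hamilton's equations there, so it suffices to show that `F₁` and `F₂` are conserved along the flow.
Writing `H = p_r² / 2 + G / r²`, the angular Hamiltonian `G` is conserved, and with `u = 2G / r²`
the binomial sums in `F₁`, `F₂` are `E = Re (√u + i p_r)^(2n)` and `O = √u · Im (√u + i p_r)^(2n)`.
Along the flow `√u + i p_r` turns with angular velocity `√u / r`, which gives
`E' = -2n O / r` and `(r O)' = 4n G E / r²`, while `X = sin (2nφ) p_φ` and
`Y = G cos (2nφ) + b - a` satisfy `X' = 4n Y / r²` and `Y' = -2n G X / r²`. Then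
`F₁ = G X E - Y (r O)` and `F₂ = X (r O) + 2 Y E` have zero derivative.
-/

/-- The canonical Poisson bracket of two functions of `(r, φ, p_r, p_φ)`. -/
noncomputable def poissonBracket (F G : ℝ → ℝ → ℝ → ℝ → ℝ)
    (r φ pr pφ : ℝ) : ℝ :=
  deriv (fun x => F x φ pr pφ) r * deriv (fun x => G r φ x pφ) pr
  - deriv (fun x => F r φ x pφ) pr * deriv (fun x => G x φ pr pφ) r
  + deriv (fun x => F r x pr pφ) φ * deriv (fun x => G r φ pr x) pφ
  - deriv (fun x => F r φ pr x) pφ * deriv (fun x => G r x pr pφ) φ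

open Real Finset

theorem poissonBracket_eq_neg_of_hasDerivAt {H F : ℝ → ℝ → ℝ → ℝ → ℝ}
    {r φ pr pφ Hr Hφ Hpr Hpφ D : ℝ}
    (hF : DifferentiableAt ℝ (fun q : ℝ × ℝ × ℝ × ℝ => F q.1 q.2.1 q.2.2.1 q.2.2.2)
      (r, φ, pr, pφ))
    (hHr : HasDerivAt (fun x => H x φ pr pφ) Hr r)
    (hHφ : HasDerivAt (fun x => H r x pr pφ) Hφ φ)
    (hHpr : HasDerivAt (fun x => H r φ x pφ) Hpr pr)
    (hHpφ : HasDerivAt (fun x => H r φ pr x) Hpφ pφ)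
    (hD : HasDerivAt (fun t => F (r + t * Hpr) (φ + t * Hpφ) (pr - t * Hr) (pφ - t * Hφ)) D 0) :
    poissonBracket H F r φ pr pφ = -D := by
  set L := fderiv ℝ (fun q : ℝ × ℝ × ℝ × ℝ => F q.1 q.2.1 q.2.2.1 q.2.2.2) (r, φ, pr, pφ)
  have along {c : ℝ → ℝ × ℝ × ℝ × ℝ} {v : ℝ × ℝ × ℝ × ℝ} {s : ℝ} (hc : HasDerivAt c v s)
      (hs : c s = (r, φ, pr, pφ)) :
      HasDerivAt (fun t => F (c t).1 (c t).2.1 (c t).2.2.1 (c t).2.2.2) (L v) s :=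
    hF.hasFDerivAt.comp_hasDerivAt_of_eq s hc hs.symm
  have hconst {x : ℝ} (y : ℝ) : HasDerivAt (fun _ : ℝ => y) 0 x := hasDerivAt_const x y
  have hFr : HasDerivAt (fun x => F x φ pr pφ) (L (1, 0, 0, 0)) r :=
    along ((hasDerivAt_id' r).prodMk ((hconst φ).prodMk ((hconst pr).prodMk (hconst pφ)))) rfl
  have hFφ : HasDerivAt (fun x => F r x pr pφ) (L (0, 1, 0, 0)) φ :=
    along ((hconst r).prodMk ((hasDerivAt_id' φ).prodMk ((hconst pr).prodMk (hconst pφ)))) rfl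
  have hFpr : HasDerivAt (fun x => F r φ x pφ) (L (0, 0, 1, 0)) pr :=
    along ((hconst r).prodMk ((hconst φ).prodMk ((hasDerivAt_id' pr).prodMk (hconst pφ)))) rfl
  have hFpφ : HasDerivAt (fun x => F r φ pr x) (L (0, 0, 0, 1)) pφ :=
    along ((hconst r).prodMk ((hconst φ).prodMk ((hconst pr).prodMk (hasDerivAt_id' pφ)))) rfl
  have hline : HasDerivAt (fun t => F (r + t * Hpr) (φ + t * Hpφ) (pr - t * Hr) (pφ - t * Hφ))
      (L (Hpr, Hpφ, -Hr, -Hφ)) 0 :=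
    along (((hasDerivAt_mul_const Hpr).const_add r).prodMk
      (((hasDerivAt_mul_const Hpφ).const_add φ).prodMk
        (((hasDerivAt_mul_const Hr).const_sub pr).prodMk
          ((hasDerivAt_mul_const Hφ).const_sub pφ)))) (by simp)
  have hv : ((Hpr, Hpφ, -Hr, -Hφ) : ℝ × ℝ × ℝ × ℝ) = Hpr • (1, 0, 0, 0) + Hpφ • (0, 1, 0, 0)
      + (-Hr) • (0, 0, 1, 0) + (-Hφ) • (0, 0, 0, 1) := by
    simp
  rw [poissonBracket, hFr.deriv, hFφ.deriv, hFpr.deriv, hFpφ.deriv, hHr.deriv, hHφ.deriv,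
    hHpr.deriv, hHpφ.deriv, hD.unique hline, hv]
  simp only [map_add, map_smul, smul_eq_mul]
  ring

theorem Nat.cast_choose_mul_sub {R : Type*} [Ring R] (N j : ℕ) :
    (N.choose j : R) * (N - j) = N.choose (j + 1) * (j + 1) := by
  rcases le_or_gt j N with h | h
  · rw [← Nat.cast_sub h]
    simpa using congrArg (Nat.cast : ℕ → R) (Nat.choose_succ_right_eq N j).symm
  · simp [Nat.choose_eq_zero_of_lt h, Nat.choose_eq_zero_of_lt (h.trans (Nat.lt_succ_self j))]

/-- For `u = A ^ 2` this is `Re ((A + i p) ^ (2 n))`. -/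
noncomputable def evenPart (n : ℕ) (u p : ℝ) : ℝ :=
  ∑ k ∈ range (n + 1), (-1) ^ k * ((2 * n).choose (2 * k) : ℝ) * (u ^ (n - k) * p ^ (2 * k))

/-- For `u = A ^ 2` this is `A * Im ((A + i p) ^ (2 n))`. -/
noncomputable def oddPart (n : ℕ) (u p : ℝ) : ℝ :=
  ∑ k ∈ range (n + 1),
    (-1) ^ k * ((2 * n).choose (2 * k + 1) : ℝ) * (u ^ (n - k) * p ^ (2 * k + 1))

section RotatingFlow

/-! The hypotheses `u' = 2 c u p`, `p' = -c u` say that `√u + i p` is rotated with angular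
velocity `-c √u`. -/

variable {u p : ℝ → ℝ} {c t : ℝ}

theorem hasDerivAt_pow_mul_pow (hu : HasDerivAt u (2 * c * u t * p t) t)
    (hp : HasDerivAt p (-(c * u t)) t) (m j : ℕ) :
    HasDerivAt (fun s => u s ^ m * p s ^ j)
      (c * (2 * m * (u t ^ m * p t ^ (j + 1)) - j * (u t ^ (m + 1) * p t ^ (j - 1)))) t := by
  refine ((hu.fun_pow m).fun_mul (hp.fun_pow j)).congr_deriv ?_
  cases m <;> simp only [Nat.cast_zero, Nat.cast_succ, add_tsub_cancel_right] <;> ring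

theorem hasDerivAt_evenPart (hu : HasDerivAt u (2 * c * u t * p t) t)
    (hp : HasDerivAt p (-(c * u t)) t) (n : ℕ) :
    HasDerivAt (fun s => evenPart n (u s) (p s)) (2 * n * c * oddPart n (u t) (p t)) t := by
  -- term `k` of the derivative minus term `k` of `2 n c oddPart` is `Y (k + 1) - Y k`
  let Y : ℕ → ℝ := fun k =>
    c * ((-1) ^ k * ((2 * n).choose (2 * k) : ℝ) * (2 * k)
      * (u t ^ (n + 1 - k) * p t ^ (2 * k - 1)))
  have hY : Y (n + 1) - Y 0 = 0 := by
    simp [Y, Nat.choose_eq_zero_of_lt (by omega : 2 * n < 2 * (n + 1))]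
  unfold evenPart
  refine (HasDerivAt.fun_sum fun k _ => (hasDerivAt_pow_mul_pow hu hp (n - k) (2 * k)).const_mul
    ((-1) ^ k * ((2 * n).choose (2 * k) : ℝ))).congr_deriv ?_
  rw [oddPart, mul_sum, ← sub_eq_zero, ← sum_sub_distrib, ← hY, ← sum_range_sub]
  refine sum_congr rfl fun k hk => ?_
  have hk : k ≤ n := Nat.lt_succ_iff.mp (mem_range.mp hk)
  have h₀ := Nat.cast_choose_mul_sub (R := ℝ) (2 * n) (2 * k)
  have h₁ := Nat.cast_choose_mul_sub (R := ℝ) (2 * n) (2 * k + 1)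
  simp only [Y, show n + 1 - (k + 1) = n - k by omega, show n + 1 - k = n - k + 1 by omega,
    show 2 * (k + 1) - 1 = 2 * k + 1 by omega]
  rw [show 2 * (k + 1) = 2 * k + 1 + 1 by ring]
  push_cast [Nat.cast_sub hk] at h₀ h₁ ⊢
  linear_combination (-1) ^ k * c * u t ^ (n - k) * p t ^ (2 * k + 1) * (h₀ - h₁)

theorem hasDerivAt_oddPart (hu : HasDerivAt u (2 * c * u t * p t) t)
    (hp : HasDerivAt p (-(c * u t)) t) (n : ℕ) :
    HasDerivAt (fun s => oddPart n (u s) (p s))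
      (c * (p t * oddPart n (u t) (p t) - 2 * n * u t * evenPart n (u t) (p t))) t := by
  -- here the difference of the `k`-th terms is `Y k - Y (k + 1)`
  let Y : ℕ → ℝ := fun k =>
    c * ((-1) ^ k * ((2 * n).choose (2 * k) : ℝ) * (2 * k) * (u t ^ (n + 1 - k) * p t ^ (2 * k)))
  have hY : Y 0 - Y (n + 1) = 0 := by
    simp [Y, Nat.choose_eq_zero_of_lt (by omega : 2 * n < 2 * (n + 1))]
  unfold oddPart
  refine (HasDerivAt.fun_sum fun k _ =>
    (hasDerivAt_pow_mul_pow hu hp (n - k) (2 * k + 1)).const_mul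
      ((-1) ^ k * ((2 * n).choose (2 * k + 1) : ℝ))).congr_deriv ?_
  rw [evenPart, mul_sum, mul_sum, ← sum_sub_distrib, mul_sum, ← sub_eq_zero, ← sum_sub_distrib,
    ← hY, ← sum_range_sub']
  refine sum_congr rfl fun k hk => ?_
  have hk : k ≤ n := Nat.lt_succ_iff.mp (mem_range.mp hk)
  have h₀ := Nat.cast_choose_mul_sub (R := ℝ) (2 * n) (2 * k)
  have h₁ := Nat.cast_choose_mul_sub (R := ℝ) (2 * n) (2 * k + 1)
  simp only [Y, show n + 1 - (k + 1) = n - k by omega, show n + 1 - k = n - k + 1 by omega,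
    add_tsub_cancel_right]
  rw [show 2 * (k + 1) = 2 * k + 1 + 1 by ring]
  push_cast [Nat.cast_sub hk] at h₀ h₁ ⊢
  linear_combination (-1) ^ k * c * (u t ^ (n - k) * p t ^ (2 * k + 2) * h₁
    + u t ^ (n - k + 1) * p t ^ (2 * k) * h₀)

end RotatingFlow

theorem sum_eq_evenPart_add_oddPart (n : ℕ) (g r p X Y : ℝ) :
    ∑ k ∈ range (n + 1), (-1 : ℝ) ^ k * ((2 * n).choose (2 * k) : ℝ) * (2 * g) ^ (n - k)
        * (p ^ (2 * k) / r ^ (2 * (n - k))) * (X + 2 * ((n : ℝ) - k) / (2 * k + 1) * Y * r * p)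
      = X * evenPart n (2 * g / r ^ 2) p + Y * (r * oddPart n (2 * g / r ^ 2) p) := by
  rw [evenPart, oddPart, mul_sum, mul_sum, mul_sum, ← sum_add_distrib]
  refine sum_congr rfl fun k hk => ?_
  have hk : k ≤ n := Nat.lt_succ_iff.mp (mem_range.mp hk)
  have h := Nat.cast_choose_mul_sub (R := ℝ) (2 * n) (2 * k)
  have he : ((2 * n).choose (2 * k) : ℝ) * (2 * ((n : ℝ) - k) / (2 * k + 1))
      = (2 * n).choose (2 * k + 1) := by
    push_cast at h
    field_simp
    linear_combination h
  rw [div_pow, ← pow_mul, mul_comm 2 (n - k)]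
  linear_combination
    (-1 : ℝ) ^ k * (2 * g) ^ (n - k) * (p ^ (2 * k) / r ^ (2 * (n - k))) * Y * r * p * he

noncomputable def ttwPotential (n : ℕ) (a b φ : ℝ) : ℝ :=
  a / cos (n * φ) ^ 2 + b / sin (n * φ) ^ 2

theorem hasDerivAt_ttwPotential {n : ℕ} {a b φ : ℝ} (hc : cos (n * φ) ≠ 0)
    (hs : sin (n * φ) ≠ 0) :
    HasDerivAt (ttwPotential n a b)
      (2 * n * (a * sin (n * φ) / cos (n * φ) ^ 3 - b * cos (n * φ) / sin (n * φ) ^ 3)) φ := by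
  have hlin : HasDerivAt (fun x : ℝ => n * x) n φ := by
    simpa using (hasDerivAt_id' φ).const_mul (n : ℝ)
  refine (((hasDerivAt_const φ a).fun_div (hlin.cos.fun_pow 2) (pow_ne_zero 2 hc)).fun_add
    ((hasDerivAt_const φ b).fun_div (hlin.sin.fun_pow 2) (pow_ne_zero 2 hs))).congr_deriv ?_
  field_simp
  ring

theorem sin_mul_deriv_ttwPotential {n : ℕ} {a b φ : ℝ} (hc : cos (n * φ) ≠ 0)
    (hs : sin (n * φ) ≠ 0) :
    sin (2 * n * φ) * deriv (ttwPotential n a b) φ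
      = -(4 * n * (ttwPotential n a b φ * cos (2 * n * φ) + b - a)) := by
  rw [(hasDerivAt_ttwPotential hc hs).deriv, ttwPotential, mul_assoc, sin_two_mul, cos_two_mul]
  field_simp
  linear_combination
    (4 * n * (a * sin (n * φ) ^ 2 + b * cos (n * φ) ^ 2)) * sin_sq_add_cos_sq ((n : ℝ) * φ)

noncomputable def ttwAngularHamiltonian (n : ℕ) (a b φ pφ : ℝ) : ℝ :=
  pφ ^ 2 / 2 + ttwPotential n a b φ

noncomputable def ttwHamiltonian (n : ℕ) (a b r φ pr pφ : ℝ) : ℝ :=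
  pr ^ 2 / 2 + ttwAngularHamiltonian n a b φ pφ / r ^ 2

/-- Hamilton's equations of `ttwHamiltonian` at time `t`. -/
structure IsTTWTrajectoryAt (n : ℕ) (a b : ℝ) (r φ p pφ : ℝ → ℝ) (t : ℝ) : Prop where
  hasDerivAt_r : HasDerivAt r (p t) t
  hasDerivAt_φ : HasDerivAt φ (pφ t / r t ^ 2) t
  hasDerivAt_p : HasDerivAt p (2 * ttwAngularHamiltonian n a b (φ t) (pφ t) / r t ^ 3) t
  hasDerivAt_pφ : HasDerivAt pφ (-(deriv (ttwPotential n a b) (φ t) / r t ^ 2)) t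

noncomputable def ttwF₁ (n : ℕ) (a b r φ pr pφ : ℝ) : ℝ :=
  ttwAngularHamiltonian n a b φ pφ * (sin (2 * n * φ) * pφ)
      * evenPart n (2 * ttwAngularHamiltonian n a b φ pφ / r ^ 2) pr
    - (ttwAngularHamiltonian n a b φ pφ * cos (2 * n * φ) + b - a)
      * (r * oddPart n (2 * ttwAngularHamiltonian n a b φ pφ / r ^ 2) pr)

noncomputable def ttwF₂ (n : ℕ) (a b r φ pr pφ : ℝ) : ℝ :=
  sin (2 * n * φ) * pφ * (r * oddPart n (2 * ttwAngularHamiltonian n a b φ pφ / r ^ 2) pr)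
    + 2 * (ttwAngularHamiltonian n a b φ pφ * cos (2 * n * φ) + b - a)
      * evenPart n (2 * ttwAngularHamiltonian n a b φ pφ / r ^ 2) pr

namespace IsTTWTrajectoryAt

variable {n : ℕ} {a b t : ℝ} {r φ p pφ : ℝ → ℝ}

theorem hasDerivAt_angularHamiltonian (h : IsTTWTrajectoryAt n a b r φ p pφ t)
    (hc : cos (n * φ t) ≠ 0) (hs : sin (n * φ t) ≠ 0) :
    HasDerivAt (fun s => ttwAngularHamiltonian n a b (φ s) (pφ s)) 0 t := by
  have hV := (hasDerivAt_ttwPotential (a := a) (b := b) hc hs).differentiableAt.hasDerivAt.comp t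
    h.hasDerivAt_φ
  refine ((h.hasDerivAt_pφ.fun_pow 2).div_const 2 |>.fun_add hV).congr_deriv ?_
  ring

theorem hasDerivAt_sin_mul (h : IsTTWTrajectoryAt n a b r φ p pφ t)
    (hc : cos (n * φ t) ≠ 0) (hs : sin (n * φ t) ≠ 0) :
    HasDerivAt (fun s => sin (2 * n * φ s) * pφ s)
      (4 * n * (ttwAngularHamiltonian n a b (φ t) (pφ t) * cos (2 * n * φ t) + b - a) / r t ^ 2)
      t := by
  refine ((h.hasDerivAt_φ.const_mul (2 * n : ℝ)).sin.fun_mul h.hasDerivAt_pφ).congr_deriv ?_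
  rw [ttwAngularHamiltonian]
  linear_combination (-1 / r t ^ 2) * sin_mul_deriv_ttwPotential (a := a) (b := b) hc hs

theorem hasDerivAt_cos_add (h : IsTTWTrajectoryAt n a b r φ p pφ t)
    (hc : cos (n * φ t) ≠ 0) (hs : sin (n * φ t) ≠ 0) :
    HasDerivAt (fun s => ttwAngularHamiltonian n a b (φ s) (pφ s) * cos (2 * n * φ s) + b - a)
      (-(2 * n * ttwAngularHamiltonian n a b (φ t) (pφ t) * (sin (2 * n * φ t) * pφ t) / r t ^ 2))
      t := by
  have hC := (h.hasDerivAt_φ.const_mul (2 * n : ℝ)).cos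
  refine (((h.hasDerivAt_angularHamiltonian hc hs).fun_mul hC).add_const b |>.sub_const a
    ).congr_deriv ?_
  ring

theorem hasDerivAt_two_mul_div_sq (h : IsTTWTrajectoryAt n a b r φ p pφ t)
    (hr : r t ≠ 0) (hc : cos (n * φ t) ≠ 0) (hs : sin (n * φ t) ≠ 0) :
    HasDerivAt (fun s => 2 * ttwAngularHamiltonian n a b (φ s) (pφ s) / r s ^ 2)
      (2 * (-1 / r t) * (2 * ttwAngularHamiltonian n a b (φ t) (pφ t) / r t ^ 2) * p t) t := by
  refine (((h.hasDerivAt_angularHamiltonian hc hs).const_mul 2).fun_div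
    (h.hasDerivAt_r.fun_pow 2) (pow_ne_zero 2 hr)).congr_deriv ?_
  field_simp
  ring

theorem hasDerivAt_evenPart (h : IsTTWTrajectoryAt n a b r φ p pφ t)
    (hr : r t ≠ 0) (hc : cos (n * φ t) ≠ 0) (hs : sin (n * φ t) ≠ 0) (m : ℕ) :
    HasDerivAt (fun s => evenPart m (2 * ttwAngularHamiltonian n a b (φ s) (pφ s) / r s ^ 2) (p s))
      (-(2 * m / r t * oddPart m (2 * ttwAngularHamiltonian n a b (φ t) (pφ t) / r t ^ 2) (p t)))
      t :=
  (_root_.hasDerivAt_evenPart (h.hasDerivAt_two_mul_div_sq hr hc hs)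
    (h.hasDerivAt_p.congr_deriv (by field_simp)) m).congr_deriv (by ring)

theorem hasDerivAt_mul_oddPart (h : IsTTWTrajectoryAt n a b r φ p pφ t)
    (hr : r t ≠ 0) (hc : cos (n * φ t) ≠ 0) (hs : sin (n * φ t) ≠ 0) (m : ℕ) :
    HasDerivAt
      (fun s => r s * oddPart m (2 * ttwAngularHamiltonian n a b (φ s) (pφ s) / r s ^ 2) (p s))
      (4 * m * ttwAngularHamiltonian n a b (φ t) (pφ t) / r t ^ 2
        * evenPart m (2 * ttwAngularHamiltonian n a b (φ t) (pφ t) / r t ^ 2) (p t)) t := by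
  refine (h.hasDerivAt_r.fun_mul (_root_.hasDerivAt_oddPart (h.hasDerivAt_two_mul_div_sq hr hc hs)
    (h.hasDerivAt_p.congr_deriv (by field_simp)) m)).congr_deriv ?_
  field_simp
  ring

theorem hasDerivAt_ttwF₁ (h : IsTTWTrajectoryAt n a b r φ p pφ t)
    (hr : r t ≠ 0) (hc : cos (n * φ t) ≠ 0) (hs : sin (n * φ t) ≠ 0) :
    HasDerivAt (fun s => ttwF₁ n a b (r s) (φ s) (p s) (pφ s)) 0 t := by
  unfold ttwF₁
  refine ((((h.hasDerivAt_angularHamiltonian hc hs).fun_mul (h.hasDerivAt_sin_mul hc hs)).fun_mul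
    (h.hasDerivAt_evenPart hr hc hs n)).fun_sub
    ((h.hasDerivAt_cos_add hc hs).fun_mul (h.hasDerivAt_mul_oddPart hr hc hs n))).congr_deriv ?_
  field_simp
  ring

theorem hasDerivAt_ttwF₂ (h : IsTTWTrajectoryAt n a b r φ p pφ t)
    (hr : r t ≠ 0) (hc : cos (n * φ t) ≠ 0) (hs : sin (n * φ t) ≠ 0) :
    HasDerivAt (fun s => ttwF₂ n a b (r s) (φ s) (p s) (pφ s)) 0 t := by
  unfold ttwF₂
  refine (((h.hasDerivAt_sin_mul hc hs).fun_mul (h.hasDerivAt_mul_oddPart hr hc hs n)).fun_add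
    (((h.hasDerivAt_cos_add hc hs).const_mul 2).fun_mul
      (h.hasDerivAt_evenPart hr hc hs n))).congr_deriv ?_
  field_simp
  ring

end IsTTWTrajectoryAt

section Differentiability

variable {n : ℕ} {a b r φ pr pφ : ℝ}

theorem differentiableAt_ttwF₁ (hr : r ≠ 0) (hc : cos (n * φ) ≠ 0) (hs : sin (n * φ) ≠ 0) :
    DifferentiableAt ℝ (fun q : ℝ × ℝ × ℝ × ℝ => ttwF₁ n a b q.1 q.2.1 q.2.2.1 q.2.2.2)
      (r, φ, pr, pφ) := by
  unfold ttwF₁ ttwAngularHamiltonian ttwPotential evenPart oddPart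
  fun_prop (disch := simp [*])

theorem differentiableAt_ttwF₂ (hr : r ≠ 0) (hc : cos (n * φ) ≠ 0) (hs : sin (n * φ) ≠ 0) :
    DifferentiableAt ℝ (fun q : ℝ × ℝ × ℝ × ℝ => ttwF₂ n a b q.1 q.2.1 q.2.2.1 q.2.2.2)
      (r, φ, pr, pφ) := by
  unfold ttwF₂ ttwAngularHamiltonian ttwPotential evenPart oddPart
  fun_prop (disch := simp [*])

end Differentiability

theorem poissonBracket_ttwHamiltonian_eq_zero {n : ℕ} {a b r φ pr pφ : ℝ}
    {F : ℝ → ℝ → ℝ → ℝ → ℝ} (hr : r ≠ 0) (hc : cos (n * φ) ≠ 0) (hs : sin (n * φ) ≠ 0)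
    (hF : DifferentiableAt ℝ (fun q : ℝ × ℝ × ℝ × ℝ => F q.1 q.2.1 q.2.2.1 q.2.2.2)
      (r, φ, pr, pφ))
    (hcons : ∀ {r' φ' p' pφ' : ℝ → ℝ}, IsTTWTrajectoryAt n a b r' φ' p' pφ' 0 → r' 0 = r →
      φ' 0 = φ → HasDerivAt (fun s => F (r' s) (φ' s) (p' s) (pφ' s)) 0 0) :
    poissonBracket (ttwHamiltonian n a b) F r φ pr pφ = 0 := by
  set G := ttwAngularHamiltonian n a b φ pφ
  set V' := deriv (ttwPotential n a b) φ
  have hHr : HasDerivAt (fun x => ttwHamiltonian n a b x φ pr pφ) (-(2 * G / r ^ 3)) r := by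
    refine (((hasDerivAt_const r G).fun_div (hasDerivAt_pow 2 r) (pow_ne_zero 2 hr)).const_add
      (pr ^ 2 / 2)).congr_deriv ?_
    field_simp
    ring
  have hHφ : HasDerivAt (fun x => ttwHamiltonian n a b r x pr pφ) (V' / r ^ 2) φ :=
    (((hasDerivAt_ttwPotential (a := a) (b := b) hc hs).differentiableAt.hasDerivAt.const_add
      (pφ ^ 2 / 2)).div_const (r ^ 2)).const_add (pr ^ 2 / 2)
  have hHpr : HasDerivAt (fun x => ttwHamiltonian n a b r φ x pφ) pr pr :=
    (((hasDerivAt_pow 2 pr).div_const 2).add_const (G / r ^ 2)).congr_deriv (by simp)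
  have hHpφ : HasDerivAt (fun x => ttwHamiltonian n a b r φ pr x) (pφ / r ^ 2) pφ :=
    ((((hasDerivAt_pow 2 pφ).div_const 2).add_const (ttwPotential n a b φ)).div_const
      (r ^ 2)).const_add (pr ^ 2 / 2) |>.congr_deriv (by simp)
  have hline : IsTTWTrajectoryAt n a b (fun t => r + t * pr) (fun t => φ + t * (pφ / r ^ 2))
      (fun t => pr - t * -(2 * G / r ^ 3)) (fun t => pφ - t * (V' / r ^ 2)) 0 :=
    ⟨((hasDerivAt_mul_const pr).const_add r).congr_deriv (by simp),
      ((hasDerivAt_mul_const _).const_add φ).congr_deriv (by simp),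
      ((hasDerivAt_mul_const _).const_sub pr).congr_deriv (by simp [G]),
      ((hasDerivAt_mul_const _).const_sub pφ).congr_deriv (by simp [V'])⟩
  simpa using poissonBracket_eq_neg_of_hasDerivAt hF hHr hHφ hHpr hHpφ
    (hcons hline (by simp) (by simp))

theorem ttw_additional_integrals_general (n : ℕ) (a b : ℝ)
    (H G F₁ F₂ : ℝ → ℝ → ℝ → ℝ → ℝ)
    (hH : H = fun r φ pr pφ =>
      (1 / 2) * (pr ^ 2 + pφ ^ 2 / r ^ 2) + a / (r ^ 2 * Real.cos (n * φ) ^ 2)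
        + b / (r ^ 2 * Real.sin (n * φ) ^ 2))
    (hG : G = fun _r φ _pr pφ =>
      (1 / 2) * pφ ^ 2 + a / Real.cos (n * φ) ^ 2 + b / Real.sin (n * φ) ^ 2)
    (hF₁ : F₁ = fun r φ pr pφ =>
      ∑ k ∈ Finset.range (n + 1),
        (-1 : ℝ) ^ k * ((2 * n).choose (2 * k) : ℝ)
          * (2 * G r φ pr pφ) ^ (n - k)
          * (pr ^ (2 * k) / r ^ (2 * (n - k)))
          * (G r φ pr pφ * Real.sin (2 * n * φ) * pφ
              - 2 * ((n : ℝ) - k) / (2 * k + 1)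
                * (G r φ pr pφ * Real.cos (2 * n * φ) + b - a) * r * pr))
    (hF₂ : F₂ = fun r φ pr pφ =>
      ∑ k ∈ Finset.range (n + 1),
        (-1 : ℝ) ^ k * ((2 * n).choose (2 * k) : ℝ)
          * (2 * G r φ pr pφ) ^ (n - k)
          * (pr ^ (2 * k) / r ^ (2 * (n - k)))
          * (2 * ((n : ℝ) - k) / (2 * k + 1) * Real.sin (2 * n * φ) * r * pr * pφ
              + 2 * (G r φ pr pφ * Real.cos (2 * n * φ) + b - a))) :
    ∀ r φ pr pφ : ℝ, 0 < r → Real.cos (n * φ) ≠ 0 → Real.sin (n * φ) ≠ 0 →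
      0 < G r φ pr pφ →
      poissonBracket H F₁ r φ pr pφ = 0 ∧ poissonBracket H F₂ r φ pr pφ = 0 := by
  intro r φ pr pφ hr hc hs _
  have hG' : G = fun _ φ _ pφ => ttwAngularHamiltonian n a b φ pφ := by
    rw [hG]
    funext _ φ _ pφ
    unfold ttwAngularHamiltonian ttwPotential
    ring
  have hH' : H = ttwHamiltonian n a b := by
    rw [hH]
    funext r φ pr pφ
    unfold ttwHamiltonian ttwAngularHamiltonian ttwPotential
    ring
  have hF₁' : F₁ = ttwF₁ n a b := by
    funext r φ pr pφ
    rw [hF₁, hG', ttwF₁, sub_eq_add_neg, ← neg_mul, ← sum_eq_evenPart_add_oddPart]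
    exact sum_congr rfl fun k _ => by ring
  have hF₂' : F₂ = ttwF₂ n a b := by
    funext r φ pr pφ
    rw [hF₂, hG', ttwF₂, add_comm (sin (2 * n * φ) * pφ * _), ← sum_eq_evenPart_add_oddPart]
    exact sum_congr rfl fun k _ => by ring
  rw [hH', hF₁', hF₂']
  exact ⟨poissonBracket_ttwHamiltonian_eq_zero hr.ne' hc hs (differentiableAt_ttwF₁ hr.ne' hc hs)
      fun h hr₀ hφ₀ => h.hasDerivAt_ttwF₁ (hr₀ ▸ hr.ne') (hφ₀ ▸ hc) (hφ₀ ▸ hs),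
    poissonBracket_ttwHamiltonian_eq_zero hr.ne' hc hs (differentiableAt_ttwF₂ hr.ne' hc hs)
      fun h hr₀ hφ₀ => h.hasDerivAt_ttwF₂ (hr₀ ▸ hr.ne') (hφ₀ ▸ hc) (hφ₀ ▸ hs)⟩

/-- For the TTW Hamiltonian
`H = (1/2)(p_r² + p_φ²/r²) + a/(r² cos²(nφ)) + b/(r² sin²(nφ))` with
`G = (1/2)p_φ² + a/cos²(nφ) + b/sin²(nφ)`, the functions `F₁`, `F₂` below are first
integrals of `H` on the open set where `r > 0`, `cos(nφ) ≠ 0`, `sin(nφ) ≠ 0`, `G > 0`. -/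
theorem ttw_additional_integrals (n : ℕ) (hn : 0 < n) (a b : ℝ)
    (H G F₁ F₂ : ℝ → ℝ → ℝ → ℝ → ℝ)
    (hH : H = fun r φ pr pφ =>
      (1 / 2) * (pr ^ 2 + pφ ^ 2 / r ^ 2) + a / (r ^ 2 * Real.cos (n * φ) ^ 2)
        + b / (r ^ 2 * Real.sin (n * φ) ^ 2))
    (hG : G = fun _r φ _pr pφ =>
      (1 / 2) * pφ ^ 2 + a / Real.cos (n * φ) ^ 2 + b / Real.sin (n * φ) ^ 2)
    (hF₁ : F₁ = fun r φ pr pφ =>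
      ∑ k ∈ Finset.range (n + 1),
        (-1 : ℝ) ^ k * ((2 * n).choose (2 * k) : ℝ)
          * (2 * G r φ pr pφ) ^ (n - k)
          * (pr ^ (2 * k) / r ^ (2 * (n - k)))
          * (G r φ pr pφ * Real.sin (2 * n * φ) * pφ
              - 2 * ((n : ℝ) - k) / (2 * k + 1)
                * (G r φ pr pφ * Real.cos (2 * n * φ) + b - a) * r * pr))
    (hF₂ : F₂ = fun r φ pr pφ =>
      ∑ k ∈ Finset.range (n + 1),
        (-1 : ℝ) ^ k * ((2 * n).choose (2 * k) : ℝ)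
          * (2 * G r φ pr pφ) ^ (n - k)
          * (pr ^ (2 * k) / r ^ (2 * (n - k)))
          * (2 * ((n : ℝ) - k) / (2 * k + 1) * Real.sin (2 * n * φ) * r * pr * pφ
              + 2 * (G r φ pr pφ * Real.cos (2 * n * φ) + b - a))) :
    ∀ r φ pr pφ : ℝ, 0 < r → Real.cos (n * φ) ≠ 0 → Real.sin (n * φ) ≠ 0 →
      0 < G r φ pr pφ →
      poissonBracket H F₁ r φ pr pφ = 0 ∧ poissonBracket H F₂ r φ pr pφ = 0 :=
  ttw_additional_integrals_general n a b H G F₁ F₂ hH hG hF₁ hF₂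
end

section
/- Let n be a positive integer and a,b real parameters. Consider the Hamiltonian with indefinite kinetic energy H = (1/2)(p_r² − p_φ²/r²) + a/(r² cosh²(nφ)) + b/(r² sinh²(nφ)) and set G := (1/2)p_φ² − a/cosh²(nφ) − b/sinh²(nφ). Then on the open set where r > 0, sinh(nφ) ≠ 0 and G > 0, both I₁ := r^{−2n} (√(2G) − r p_r)^{2n} [ √(2G) sinh(2nφ) p_φ + 2 (G cosh(2nφ) + a + b) ] and I₂ := r^{−2n} (√(2G) + r p_r)^{2n} [ √(2G) sinh(2nφ) p_φ − 2 (G cosh(2nφ) + a + b) ] are first integrals of H: {H,I₁} = 0 and {H,I₂} = 0 (and so is G itself: {H,G} = 0). -/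
open Real

theorem poissonBracket_eq_of_hasDerivAt {F G : ℝ → ℝ → ℝ → ℝ → ℝ}
    {r φ pr pφ Fr Fφ Fpr Fpφ Gr Gφ Gpr Gpφ : ℝ}
    (hFr : HasDerivAt (fun x => F x φ pr pφ) Fr r) (hFφ : HasDerivAt (fun x => F r x pr pφ) Fφ φ)
    (hFpr : HasDerivAt (fun x => F r φ x pφ) Fpr pr) (hFpφ : HasDerivAt (F r φ pr) Fpφ pφ)
    (hGr : HasDerivAt (fun x => G x φ pr pφ) Gr r) (hGφ : HasDerivAt (fun x => G r x pr pφ) Gφ φ)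
    (hGpr : HasDerivAt (fun x => G r φ x pφ) Gpr pr) (hGpφ : HasDerivAt (G r φ pr) Gpφ pφ) :
    poissonBracket F G r φ pr pφ = Fr * Gpr - Fpr * Gr + Fφ * Gpφ - Fpφ * Gφ := by
  rw [poissonBracket, hFr.deriv, hFφ.deriv, hFpr.deriv, hFpφ.deriv, hGr.deriv, hGφ.deriv,
    hGpr.deriv, hGpφ.deriv]

theorem poissonBracket_neg_right (F G : ℝ → ℝ → ℝ → ℝ → ℝ) (r φ pr pφ : ℝ) :
    poissonBracket F (fun r φ pr pφ => -G r φ pr pφ) r φ pr pφ = -poissonBracket F G r φ pr pφ := by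
  simp only [poissonBracket, deriv.fun_neg]
  ring

theorem poissonBracket_comp_neg_momenta (F G : ℝ → ℝ → ℝ → ℝ → ℝ) (r φ pr pφ : ℝ) :
    poissonBracket (fun r φ pr pφ => F r φ (-pr) (-pφ)) (fun r φ pr pφ => G r φ (-pr) (-pφ))
      r φ pr pφ = -poissonBracket F G r φ (-pr) (-pφ) := by
  simp only [poissonBracket, deriv_comp_neg (fun x => F r φ x (-pφ)),
    deriv_comp_neg (fun x => G r φ x (-pφ)), deriv_comp_neg (F r φ (-pr)),
    deriv_comp_neg (G r φ (-pr))]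
  ring

theorem poissonBracket_neg_comp_neg_momenta {H F : ℝ → ℝ → ℝ → ℝ → ℝ}
    (hH : ∀ r φ pr pφ, H r φ (-pr) (-pφ) = H r φ pr pφ) (r φ pr pφ : ℝ) :
    poissonBracket H (fun r φ pr pφ => -F r φ (-pr) (-pφ)) r φ pr pφ
      = poissonBracket H F r φ (-pr) (-pφ) := by
  have hH' : H = fun r φ pr pφ => H r φ (-pr) (-pφ) := by
    funext r φ pr pφ
    rw [hH]
  rw [poissonBracket_neg_right, neg_eq_iff_eq_neg, ← poissonBracket_comp_neg_momenta, ← hH']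

noncomputable def separableHamiltonian (g : ℝ → ℝ → ℝ) (r φ pr pφ : ℝ) : ℝ :=
  pr ^ 2 / 2 - g φ pφ / r ^ 2

section Separable

variable {g : ℝ → ℝ → ℝ} {r φ pr pφ gφ gpφ : ℝ}

theorem poissonBracket_separableHamiltonian {F : ℝ → ℝ → ℝ → ℝ → ℝ} {Fr Fφ Fpr Fpφ : ℝ}
    (hr : r ≠ 0) (hgφ : HasDerivAt (fun x => g x pφ) gφ φ) (hgpφ : HasDerivAt (g φ) gpφ pφ)
    (hFr : HasDerivAt (fun x => F x φ pr pφ) Fr r) (hFφ : HasDerivAt (fun x => F r x pr pφ) Fφ φ)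
    (hFpr : HasDerivAt (fun x => F r φ x pφ) Fpr pr) (hFpφ : HasDerivAt (F r φ pr) Fpφ pφ) :
    poissonBracket (separableHamiltonian g) F r φ pr pφ =
      2 * g φ pφ / r ^ 3 * Fpr - pr * Fr - (gφ * Fpφ - gpφ * Fφ) / r ^ 2 := by
  have hHr : HasDerivAt (fun x => separableHamiltonian g x φ pr pφ) (2 * g φ pφ / r ^ 3) r :=
    ((hasDerivAt_const r (pr ^ 2 / 2)).sub ((hasDerivAt_const r (g φ pφ)).div
      (hasDerivAt_pow 2 r) (pow_ne_zero 2 hr))).congr_deriv (by field_simp; ring)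
  have hHpr : HasDerivAt (fun x => separableHamiltonian g r φ x pφ) pr pr :=
    (((hasDerivAt_pow 2 pr).div_const 2).sub_const (g φ pφ / r ^ 2)).congr_deriv (by ring)
  have hHφ : HasDerivAt (fun x => separableHamiltonian g r x pr pφ) (-(gφ / r ^ 2)) φ :=
    (hgφ.div_const (r ^ 2)).const_sub (pr ^ 2 / 2)
  have hHpφ : HasDerivAt (separableHamiltonian g r φ pr) (-(gpφ / r ^ 2)) pφ :=
    (hgpφ.div_const (r ^ 2)).const_sub (pr ^ 2 / 2)
  rw [poissonBracket_eq_of_hasDerivAt hHr hHφ hHpr hHpφ hFr hFφ hFpr hFpφ]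
  ring

theorem poissonBracket_separableHamiltonian_self (hr : r ≠ 0)
    (hgφ : HasDerivAt (fun x => g x pφ) gφ φ) (hgpφ : HasDerivAt (g φ) gpφ pφ) :
    poissonBracket (separableHamiltonian g) (fun _ φ _ pφ => g φ pφ) r φ pr pφ = 0 := by
  rw [poissonBracket_separableHamiltonian (F := fun _ φ _ pφ => g φ pφ) hr hgφ hgpφ
    (hasDerivAt_const r _) hgφ (hasDerivAt_const pr _) hgpφ]
  ring

theorem poissonBracket_separableHamiltonian_mul {κ : ℝ → ℝ → ℝ} {f : ℝ → ℝ → ℝ → ℝ} (hr : r ≠ 0)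
    (hgφ : DifferentiableAt ℝ (fun x => g x pφ) φ) (hgpφ : DifferentiableAt ℝ (g φ) pφ)
    (hfr : DifferentiableAt ℝ (fun x => f x pr (g φ pφ)) r)
    (hfpr : DifferentiableAt ℝ (fun x => f r x (g φ pφ)) pr)
    (hfγ : DifferentiableAt ℝ (f r pr) (g φ pφ))
    (hκφ : DifferentiableAt ℝ (fun x => κ x pφ) φ) (hκpφ : DifferentiableAt ℝ (κ φ) pφ) :
    poissonBracket (separableHamiltonian g) (fun r φ pr pφ => f r pr (g φ pφ) * κ φ pφ)
        r φ pr pφ =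
      poissonBracket (separableHamiltonian fun _ _ => g φ pφ) (fun r _ pr _ => f r pr (g φ pφ))
          r φ pr pφ * κ φ pφ
        - f r pr (g φ pφ)
          * poissonBracket (fun _ φ _ pφ => g φ pφ) (fun _ φ _ pφ => κ φ pφ) r φ pr pφ / r ^ 2 := by
  have hFφ := (hfγ.hasDerivAt.comp φ hgφ.hasDerivAt).mul hκφ.hasDerivAt
  have hFpφ := (hfγ.hasDerivAt.comp pφ hgpφ.hasDerivAt).mul hκpφ.hasDerivAt
  rw [poissonBracket_separableHamiltonian hr hgφ.hasDerivAt hgpφ.hasDerivAt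
      (hfr.hasDerivAt.mul_const _) hFφ (hfpr.hasDerivAt.mul_const _) hFpφ,
    poissonBracket_separableHamiltonian hr (hasDerivAt_const φ _) (hasDerivAt_const pφ _)
      hfr.hasDerivAt (hasDerivAt_const φ _) hfpr.hasDerivAt (hasDerivAt_const pφ _),
    poissonBracket_eq_of_hasDerivAt (hasDerivAt_const r _) hgφ.hasDerivAt
      (hasDerivAt_const pr _) hgpφ.hasDerivAt (hasDerivAt_const r _) hκφ.hasDerivAt
      (hasDerivAt_const pr _) hκpφ.hasDerivAt, Function.comp_apply, Function.comp_apply]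
  ring

end Separable

noncomputable def radialFactor (m : ℕ) (r pr γ : ℝ) : ℝ :=
  r ^ (-(m : ℤ)) * (√(2 * γ) - r * pr) ^ m

section Radial

variable {m : ℕ} {r pr γ : ℝ}

theorem hasDerivAt_radialFactor_r (hr : r ≠ 0) :
    HasDerivAt (fun x => radialFactor m x pr γ)
      (-m * r ^ (-(m : ℤ)) / r * (√(2 * γ) - r * pr) ^ m
        - m * r ^ (-(m : ℤ)) * (√(2 * γ) - r * pr) ^ (m - 1) * pr) r := by
  have := (hasDerivAt_zpow (-(m : ℤ)) r (Or.inl hr)).mul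
    ((((hasDerivAt_id' r).mul_const pr).const_sub (√(2 * γ))).fun_pow m)
  refine this.congr_deriv ?_
  rw [zpow_sub_one₀ hr]
  push_cast
  ring

theorem hasDerivAt_radialFactor_pr :
    HasDerivAt (fun x => radialFactor m r x γ)
      (-(m * r ^ (-(m : ℤ)) * (√(2 * γ) - r * pr) ^ (m - 1) * r)) pr := by
  have := ((((hasDerivAt_id' pr).const_mul r).const_sub (√(2 * γ))).fun_pow m).const_mul
    (r ^ (-(m : ℤ)))
  refine this.congr_deriv ?_
  ring

theorem differentiableAt_radialFactor_γ (hγ : 0 < γ) :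
    DifferentiableAt ℝ (radialFactor m r pr) γ := by
  unfold radialFactor
  fun_prop (disch := positivity)

theorem poissonBracket_radialFactor (hr : r ≠ 0) (hγ : 0 ≤ γ) (φ pφ : ℝ) :
    poissonBracket (separableHamiltonian fun _ _ => γ) (fun r _ pr _ => radialFactor m r pr γ)
      r φ pr pφ = -(m * √(2 * γ) * radialFactor m r pr γ / r ^ 2) := by
  rw [poissonBracket_separableHamiltonian hr (hasDerivAt_const φ γ) (hasDerivAt_const pφ γ)
    (hasDerivAt_radialFactor_r hr) (hasDerivAt_const φ _) hasDerivAt_radialFactor_pr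
    (hasDerivAt_const pφ _)]
  have hs : √(2 * γ) ^ 2 = 2 * γ := sq_sqrt (by positivity)
  -- the factor `m` makes this hold also for `m = 0`, where `m - 1` truncates
  have hpow : (m : ℝ) * (√(2 * γ) - r * pr) ^ (m - 1) * (√(2 * γ) - r * pr)
      = m * (√(2 * γ) - r * pr) ^ m := by
    rcases Nat.eq_zero_or_pos m with rfl | hm
    · simp
    · rw [mul_assoc, pow_sub_one_mul hm.ne']
  unfold radialFactor
  field_simp
  linear_combination (-(r ^ (-(m : ℤ)) * (√(2 * γ) + r * pr))) * hpow
    + (m * r ^ (-(m : ℤ)) * (√(2 * γ) - r * pr) ^ (m - 1)) * hs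
end Radial

theorem hasDerivAt_sqrt_two_mul {f : ℝ → ℝ} {f' x : ℝ} (hf : HasDerivAt f f' x) (hx : 0 < f x) :
    HasDerivAt (fun y => √(2 * f y)) (f' / √(2 * f x)) x :=
  ((hf.const_mul 2).sqrt (by positivity)).congr_deriv (by ring)

section TTW

variable (n : ℕ) (a b : ℝ)

noncomputable def ttwAngularIntegral (φ pφ : ℝ) : ℝ :=
  1 / 2 * pφ ^ 2 - a / cosh (n * φ) ^ 2 - b / sinh (n * φ) ^ 2

noncomputable def ttwAngularFactor (φ pφ : ℝ) : ℝ :=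
  √(2 * ttwAngularIntegral n a b φ pφ) * sinh (2 * n * φ) * pφ
    + 2 * (ttwAngularIntegral n a b φ pφ * cosh (2 * n * φ) + a + b)

noncomputable def ttwIntegral : ℝ → ℝ → ℝ → ℝ → ℝ := fun r φ pr pφ =>
  radialFactor (2 * n) r pr (ttwAngularIntegral n a b φ pφ) * ttwAngularFactor n a b φ pφ

variable {n a b} {φ pφ : ℝ}

theorem hasDerivAt_ttwAngularIntegral_φ (hsh : sinh (n * φ) ≠ 0) :
    HasDerivAt (fun x => ttwAngularIntegral n a b x pφ)
      (2 * n * (a * sinh (n * φ) / cosh (n * φ) ^ 3 + b * cosh (n * φ) / sinh (n * φ) ^ 3)) φ := by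
  have hnφ : HasDerivAt (fun x : ℝ => n * x) n φ := by
    simpa using (hasDerivAt_id' φ).const_mul (n : ℝ)
  have := ((hasDerivAt_const φ (1 / 2 * pφ ^ 2)).sub ((hasDerivAt_const φ a).div
    (hnφ.cosh.fun_pow 2) (pow_ne_zero 2 (cosh_pos _).ne'))).sub
    ((hasDerivAt_const φ b).div (hnφ.sinh.fun_pow 2) (pow_ne_zero 2 hsh))
  refine this.congr_deriv ?_
  have := (cosh_pos (n * φ)).ne'
  field_simp
  ring

theorem hasDerivAt_ttwAngularIntegral_pφ :
    HasDerivAt (ttwAngularIntegral n a b φ) pφ pφ :=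
  (((hasDerivAt_pow 2 pφ).const_mul (1 / 2)).sub_const _ |>.sub_const _).congr_deriv (by ring)

theorem hasDerivAt_ttwAngularFactor_φ (hsh : sinh (n * φ) ≠ 0)
    (hG : 0 < ttwAngularIntegral n a b φ pφ) :
    HasDerivAt (fun x => ttwAngularFactor n a b x pφ)
      (let G := ttwAngularIntegral n a b φ pφ
       let Gφ := 2 * n * (a * sinh (n * φ) / cosh (n * φ) ^ 3 + b * cosh (n * φ) / sinh (n * φ) ^ 3)
       Gφ / √(2 * G) * sinh (2 * n * φ) * pφ + √(2 * G) * (2 * n * cosh (2 * n * φ)) * pφ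
        + 2 * (Gφ * cosh (2 * n * φ) + G * (2 * n * sinh (2 * n * φ)))) φ := by
  have hGφ := hasDerivAt_ttwAngularIntegral_φ (a := a) (b := b) (pφ := pφ) hsh
  have h2nφ : HasDerivAt (fun x : ℝ => 2 * n * x) (2 * n) φ := by
    simpa using (hasDerivAt_id' φ).const_mul (2 * n : ℝ)
  have := (((hasDerivAt_sqrt_two_mul hGφ hG).mul h2nφ.sinh).mul_const pφ).add
    (((hGφ.mul h2nφ.cosh).add_const a |>.add_const b).const_mul 2)
  exact this.congr_deriv (by ring)

theorem hasDerivAt_ttwAngularFactor_pφ (hG : 0 < ttwAngularIntegral n a b φ pφ) :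
    HasDerivAt (ttwAngularFactor n a b φ)
      (let G := ttwAngularIntegral n a b φ pφ
       pφ / √(2 * G) * sinh (2 * n * φ) * pφ + √(2 * G) * sinh (2 * n * φ)
        + 2 * (pφ * cosh (2 * n * φ))) pφ := by
  have hGpφ := hasDerivAt_ttwAngularIntegral_pφ (n := n) (a := a) (b := b) (φ := φ) (pφ := pφ)
  have := (((hasDerivAt_sqrt_two_mul hGpφ hG).mul_const (sinh (2 * n * φ))).mul
    (hasDerivAt_id' pφ)).add (((hGpφ.mul_const (cosh (2 * n * φ))).add_const a
      |>.add_const b).const_mul 2)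
  exact this.congr_deriv (by ring)

theorem poissonBracket_ttwAngularFactor (hsh : sinh (n * φ) ≠ 0)
    (hG : 0 < ttwAngularIntegral n a b φ pφ) (r pr : ℝ) :
    poissonBracket (fun _ φ _ pφ => ttwAngularIntegral n a b φ pφ)
      (fun _ φ _ pφ => ttwAngularFactor n a b φ pφ) r φ pr pφ
      = -(2 * n * √(2 * ttwAngularIntegral n a b φ pφ) * ttwAngularFactor n a b φ pφ) := by
  rw [poissonBracket_eq_of_hasDerivAt (F := fun _ φ _ pφ => ttwAngularIntegral n a b φ pφ)
    (G := fun _ φ _ pφ => ttwAngularFactor n a b φ pφ) (hasDerivAt_const r _)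
    (hasDerivAt_ttwAngularIntegral_φ hsh) (hasDerivAt_const pr _) hasDerivAt_ttwAngularIntegral_pφ
    (hasDerivAt_const r _) (hasDerivAt_ttwAngularFactor_φ hsh hG) (hasDerivAt_const pr _)
    (hasDerivAt_ttwAngularFactor_pφ hG)]
  have hs : √(2 * ttwAngularIntegral n a b φ pφ) ^ 2 = 2 * ttwAngularIntegral n a b φ pφ :=
    sq_sqrt (by positivity)
  have hkey : 2 * n * (a * sinh (n * φ) / cosh (n * φ) ^ 3 + b * cosh (n * φ) / sinh (n * φ) ^ 3)
      * sinh (2 * n * φ) - 2 * n * pφ ^ 2 * cosh (2 * n * φ)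
      + 4 * n * (ttwAngularIntegral n a b φ pφ * cosh (2 * n * φ) + a + b) = 0 := by
    have := (cosh_pos (n * φ)).ne'
    rw [mul_assoc 2 (n : ℝ) φ, sinh_two_mul, cosh_two_mul, ttwAngularIntegral]
    field_simp
    ring
  unfold ttwAngularFactor
  linear_combination √(2 * ttwAngularIntegral n a b φ pφ) * hkey
    + 2 * n * sinh (2 * n * φ) * pφ * hs

theorem poissonBracket_ttwIntegral {r pr : ℝ} (hr : r ≠ 0)
    (hsh : sinh (n * φ) ≠ 0) (hG : 0 < ttwAngularIntegral n a b φ pφ) :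
    poissonBracket (separableHamiltonian (ttwAngularIntegral n a b)) (ttwIntegral n a b)
      r φ pr pφ = 0 := by
  unfold ttwIntegral
  rw [poissonBracket_separableHamiltonian_mul hr
      (hasDerivAt_ttwAngularIntegral_φ hsh).differentiableAt
      hasDerivAt_ttwAngularIntegral_pφ.differentiableAt
      (hasDerivAt_radialFactor_r hr).differentiableAt
      hasDerivAt_radialFactor_pr.differentiableAt (differentiableAt_radialFactor_γ hG)
      (hasDerivAt_ttwAngularFactor_φ hsh hG).differentiableAt
      (hasDerivAt_ttwAngularFactor_pφ hG).differentiableAt,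
    poissonBracket_radialFactor hr hG.le, poissonBracket_ttwAngularFactor hsh hG]
  push_cast
  ring

end TTW

theorem indefinite_ttw_additional_integrals_general (n : ℕ) (a b : ℝ)
    (H G I₁ I₂ : ℝ → ℝ → ℝ → ℝ → ℝ)
    (hH : H = fun r φ pr pφ =>
      (1 / 2) * (pr ^ 2 - pφ ^ 2 / r ^ 2) + a / (r ^ 2 * Real.cosh (n * φ) ^ 2)
        + b / (r ^ 2 * Real.sinh (n * φ) ^ 2))
    (hG : G = fun _r φ _pr pφ =>
      (1 / 2) * pφ ^ 2 - a / Real.cosh (n * φ) ^ 2 - b / Real.sinh (n * φ) ^ 2)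
    (hI₁ : I₁ = fun r φ pr pφ =>
      r ^ (-(2 * n : ℤ)) * (Real.sqrt (2 * G r φ pr pφ) - r * pr) ^ (2 * n)
        * (Real.sqrt (2 * G r φ pr pφ) * Real.sinh (2 * n * φ) * pφ
            + 2 * (G r φ pr pφ * Real.cosh (2 * n * φ) + a + b)))
    (hI₂ : I₂ = fun r φ pr pφ =>
      r ^ (-(2 * n : ℤ)) * (Real.sqrt (2 * G r φ pr pφ) + r * pr) ^ (2 * n)
        * (Real.sqrt (2 * G r φ pr pφ) * Real.sinh (2 * n * φ) * pφ
            - 2 * (G r φ pr pφ * Real.cosh (2 * n * φ) + a + b))) :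
    ∀ r φ pr pφ : ℝ, 0 < r → Real.sinh (n * φ) ≠ 0 → 0 < G r φ pr pφ →
      poissonBracket H I₁ r φ pr pφ = 0 ∧ poissonBracket H I₂ r φ pr pφ = 0 ∧
      poissonBracket H G r φ pr pφ = 0 := by
  obtain rfl : G = fun _ φ _ pφ => ttwAngularIntegral n a b φ pφ := hG
  have hI₂' : I₂ = fun r φ pr pφ => -I₁ r φ (-pr) (-pφ) := by
    subst hI₁ hI₂
    funext r φ pr pφ
    simp only [ttwAngularIntegral, neg_sq]
    ring
  obtain rfl : H = separableHamiltonian (ttwAngularIntegral n a b) := by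
    rw [hH]
    funext r φ pr pφ
    simp only [separableHamiltonian, ttwAngularIntegral]
    ring
  obtain rfl : I₁ = ttwIntegral n a b := by
    rw [hI₁]
    funext r φ pr pφ
    simp only [ttwIntegral, radialFactor, ttwAngularFactor]
    push_cast
    ring
  subst hI₂'
  intro r φ pr pφ hr hsh hG
  refine ⟨poissonBracket_ttwIntegral hr.ne' hsh hG, ?_,
    poissonBracket_separableHamiltonian_self hr.ne' (hasDerivAt_ttwAngularIntegral_φ hsh)
      hasDerivAt_ttwAngularIntegral_pφ⟩
  rw [poissonBracket_neg_comp_neg_momenta (by simp [separableHamiltonian, ttwAngularIntegral])]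
  exact poissonBracket_ttwIntegral hr.ne' hsh (by simpa [ttwAngularIntegral] using hG)

/-- For the indefinite-kinetic-energy Hamiltonian
`H = (1/2)(p_r² - p_φ²/r²) + a/(r² cosh²(nφ)) + b/(r² sinh²(nφ))` with
`G = (1/2)p_φ² - a/cosh²(nφ) - b/sinh²(nφ)`, the functions
`I₁ = r^{-2n} (√(2G) - r p_r)^{2n} [√(2G) sinh(2nφ) p_φ + 2(G cosh(2nφ) + a + b)]` and
`I₂ = r^{-2n} (√(2G) + r p_r)^{2n} [√(2G) sinh(2nφ) p_φ - 2(G cosh(2nφ) + a + b)]`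
are first integrals of `H` (and so is `G`) on the open set where `r > 0`,
`sinh(nφ) ≠ 0` and `G > 0`. -/
theorem indefinite_ttw_additional_integrals (n : ℕ) (hn : 0 < n) (a b : ℝ)
    (H G I₁ I₂ : ℝ → ℝ → ℝ → ℝ → ℝ)
    (hH : H = fun r φ pr pφ =>
      (1 / 2) * (pr ^ 2 - pφ ^ 2 / r ^ 2) + a / (r ^ 2 * Real.cosh (n * φ) ^ 2)
        + b / (r ^ 2 * Real.sinh (n * φ) ^ 2))
    (hG : G = fun _r φ _pr pφ =>
      (1 / 2) * pφ ^ 2 - a / Real.cosh (n * φ) ^ 2 - b / Real.sinh (n * φ) ^ 2)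
    (hI₁ : I₁ = fun r φ pr pφ =>
      r ^ (-(2 * n : ℤ)) * (Real.sqrt (2 * G r φ pr pφ) - r * pr) ^ (2 * n)
        * (Real.sqrt (2 * G r φ pr pφ) * Real.sinh (2 * n * φ) * pφ
            + 2 * (G r φ pr pφ * Real.cosh (2 * n * φ) + a + b)))
    (hI₂ : I₂ = fun r φ pr pφ =>
      r ^ (-(2 * n : ℤ)) * (Real.sqrt (2 * G r φ pr pφ) + r * pr) ^ (2 * n)
        * (Real.sqrt (2 * G r φ pr pφ) * Real.sinh (2 * n * φ) * pφ
            - 2 * (G r φ pr pφ * Real.cosh (2 * n * φ) + a + b))) :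
    ∀ r φ pr pφ : ℝ, 0 < r → Real.sinh (n * φ) ≠ 0 → 0 < G r φ pr pφ →
      poissonBracket H I₁ r φ pr pφ = 0 ∧ poissonBracket H I₂ r φ pr pφ = 0 ∧
      poissonBracket H G r φ pr pφ = 0 :=
  indefinite_ttw_additional_integrals_general n a b H G I₁ I₂ hH hG hI₁ hI₂
end
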